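/- arXiv:2102.04742 — 8 statements merged into one kernel-verified Lean document; each statement's English description precedes it below -/
import Mathlib

section
/- Let (g,[-,-],{-,-}) be a compatible Lie algebra over a field K of characteristic 0, and let ω_1, ω_2 : g × g → g be alternating bilinear maps. Suppose that for every t ∈ K, the brackets [x,y]_t = [x,y] + t·ω_1(x,y) and {x,y}_t = {x,y} + t·ω_2(x,y) make (g, [-,-]_t, {-,-}_t) a compatible Lie algebra. Then: (1) ω_1 is a Chevalley–Eilenberg 2-cocycle of the Lie algebra (g,[-,-]) with coefficients in the adjoint representation; (2) ω_2 is a Chevalley–Eilenberg 2-cocycle of the Lie algebra (g,{-,-}) with coefficients in the adjoint representation; (3) the mixed cocycle condition holds: {x, ω_1(y,z)} + {z, ω_1(x,y)} − {y, ω_1(x,z)} − ω_1({x,y},z) − ω_1({z,x},y) − ω_1({y,z},x) + [x, ω_2(y,z)] + [z, ω_2(x,y)] − [y, ω_2(x,z)] − ω_2([x,y],z) − ω_2([z,x],y) − ω_2([y,z],x) = 0 for all x,y,z; and (4) (g, ω_1, ω_2) is itself a compatible Lie algebra. -/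
def IsBilin (K : Type*) {A B C : Type*} [Field K]
    [AddCommGroup A] [Module K A] [AddCommGroup B] [Module K B]
    [AddCommGroup C] [Module K C] (f : A → B → C) : Prop :=
  (∀ a a' b, f (a + a') b = f a b + f a' b) ∧
  (∀ (c : K) (a b), f (c • a) b = c • f a b) ∧
  (∀ a b b', f a (b + b') = f a b + f a b') ∧
  (∀ (c : K) (a b), f a (c • b) = c • f a b)

/-- A Lie bracket: a bilinear, alternating map satisfying the Jacobi identity. -/
def IsLieBr (K : Type*) {g : Type*} [Field K] [AddCommGroup g] [Module K g]
    (br : g → g → g) : Prop :=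
  IsBilin K br ∧ (∀ x, br x x = 0) ∧
  (∀ x y z, br (br x y) z + br (br y z) x + br (br z x) y = 0)

/-- The compatibility condition between two brackets. -/
def IsCompatPair {g : Type*} [AddCommGroup g] (br1 br2 : g → g → g) : Prop :=
  ∀ x y z : g, br1 (br2 x y) z + br1 (br2 y z) x + br1 (br2 z x) y +
    br2 (br1 x y) z + br2 (br1 y z) x + br2 (br1 z x) y = 0

/-- A compatible Lie algebra structure: two Lie brackets satisfying the
compatibility condition. -/
def IsCompatLie (K : Type*) {g : Type*} [Field K] [AddCommGroup g] [Module K g]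
    (br1 br2 : g → g → g) : Prop :=
  IsLieBr K br1 ∧ IsLieBr K br2 ∧ IsCompatPair br1 br2

/-- If `(ω₁, ω₂)` generates an infinitesimal deformation of the compatible
Lie algebra `(g, br1, br2)` (i.e. the deformed brackets form a compatible Lie algebra
for every `t`), then `ω₁` is a 2-cocycle of `(g, br1)` with adjoint coefficients, `ω₂` is a
2-cocycle of `(g, br2)` with adjoint coefficients, the mixed cocycle condition holds, and
`(g, ω₁, ω₂)` is itself a compatible Lie algebra. -/
theorem infinitesimal_deformation_cocycle {K g : Type*} [Field K] [CharZero K]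
    [AddCommGroup g] [Module K g] (br1 br2 ω1 ω2 : g → g → g)
    (hc : IsCompatLie K br1 br2)
    (hb1 : IsBilin K ω1) (hb2 : IsBilin K ω2)
    (ha1 : ∀ x, ω1 x x = 0) (ha2 : ∀ x, ω2 x x = 0)
    (hdef : ∀ t : K, IsCompatLie K (fun x y => br1 x y + t • ω1 x y)
      (fun x y => br2 x y + t • ω2 x y)) :
    (∀ x y z : g, br1 x (ω1 y z) + br1 z (ω1 x y) - br1 y (ω1 x z)
        - ω1 (br1 x y) z - ω1 (br1 z x) y - ω1 (br1 y z) x = 0) ∧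
    (∀ x y z : g, br2 x (ω2 y z) + br2 z (ω2 x y) - br2 y (ω2 x z)
        - ω2 (br2 x y) z - ω2 (br2 z x) y - ω2 (br2 y z) x = 0) ∧
    (∀ x y z : g, br2 x (ω1 y z) + br2 z (ω1 x y) - br2 y (ω1 x z)
        - ω1 (br2 x y) z - ω1 (br2 z x) y - ω1 (br2 y z) x
        + br1 x (ω2 y z) + br1 z (ω2 x y) - br1 y (ω2 x z)
        - ω2 (br1 x y) z - ω2 (br1 z x) y - ω2 (br1 y z) x = 0) ∧
    IsCompatLie K ω1 ω2 := by
  obtain ⟨⟨hB1, hA1, hJ1⟩, ⟨hB2, hA2, hJ2⟩, hC⟩ := hc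
  have negl : ∀ (f : g → g → g), IsBilin K f → ∀ a b, f (-a) b = - f a b := by
    intro f hf a b
    rw [← neg_one_smul K a, hf.2.1, neg_one_smul]
  have skew : ∀ (f : g → g → g), IsBilin K f → (∀ x, f x x = 0) →
      ∀ a b, f a b + f b a = 0 := by
    intro f hf h0 a b
    have h := h0 (a + b)
    rw [hf.1, hf.2.2.1, hf.2.2.1, h0, h0] at h
    simpa using h
  have key : ∀ B : g, B + B = 0 → B = 0 := by
    intro B h
    have h2 : (2:K) • B = 0 := by rw [two_smul]; exact h
    simpa using (smul_eq_zero.mp h2).resolve_left (by norm_num)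
  have e3g : ∀ (f w : g → g → g), IsBilin K f → (∀ x, f x x = 0) → IsBilin K w →
      (∀ x, w x x = 0) → ∀ a b c, f (w a b) c - f c (w b a) = 0 := by
    intro f w hf hf0 hw hw0 a b c
    rw [eq_neg_of_add_eq_zero_left (skew w hw hw0 a b), negl _ hf]
    linear_combination (norm := abel1) -(skew f hf hf0 c (w b a))
  have cocyc1 : ∀ x y z : g, br1 x (ω1 y z) + br1 z (ω1 x y) - br1 y (ω1 x z)
      - ω1 (br1 x y) z - ω1 (br1 z x) y - ω1 (br1 y z) x = 0 := by
    intro x y z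
    have h1 := (hdef 1).1.2.2 x y z
    have hm := (hdef (-1)).1.2.2 x y z
    simp only [one_smul, neg_one_smul, hB1.1, hb1.1, negl _ hB1, negl _ hb1, neg_neg] at h1 hm
    have hB : br1 (ω1 x y) z + ω1 (br1 x y) z + (br1 (ω1 y z) x + ω1 (br1 y z) x) +
        (br1 (ω1 z x) y + ω1 (br1 z x) y) = 0 :=
      key _ (by linear_combination (norm := abel1) h1 - hm)
    linear_combination (norm := abel1) -hB + skew br1 hB1 hA1 x (ω1 y z) +
      skew br1 hB1 hA1 z (ω1 x y) + e3g br1 ω1 hB1 hA1 hb1 ha1 z x y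
  have jacw1 : ∀ x y z : g, ω1 (ω1 x y) z + ω1 (ω1 y z) x + ω1 (ω1 z x) y = 0 := by
    intro x y z
    have h1 := (hdef 1).1.2.2 x y z
    have hm := (hdef (-1)).1.2.2 x y z
    simp only [one_smul, neg_one_smul, hB1.1, hb1.1, negl _ hB1, negl _ hb1, neg_neg] at h1 hm
    exact key _ (by linear_combination (norm := abel1) h1 + hm - hJ1 x y z - hJ1 x y z)
  have cocyc2 : ∀ x y z : g, br2 x (ω2 y z) + br2 z (ω2 x y) - br2 y (ω2 x z)
      - ω2 (br2 x y) z - ω2 (br2 z x) y - ω2 (br2 y z) x = 0 := by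
    intro x y z
    have h1 := (hdef 1).2.1.2.2 x y z
    have hm := (hdef (-1)).2.1.2.2 x y z
    simp only [one_smul, neg_one_smul, hB2.1, hb2.1, negl _ hB2, negl _ hb2, neg_neg] at h1 hm
    have hB : br2 (ω2 x y) z + ω2 (br2 x y) z + (br2 (ω2 y z) x + ω2 (br2 y z) x) +
        (br2 (ω2 z x) y + ω2 (br2 z x) y) = 0 :=
      key _ (by linear_combination (norm := abel1) h1 - hm)
    linear_combination (norm := abel1) -hB + skew br2 hB2 hA2 x (ω2 y z) +
      skew br2 hB2 hA2 z (ω2 x y) + e3g br2 ω2 hB2 hA2 hb2 ha2 z x y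
  have jacw2 : ∀ x y z : g, ω2 (ω2 x y) z + ω2 (ω2 y z) x + ω2 (ω2 z x) y = 0 := by
    intro x y z
    have h1 := (hdef 1).2.1.2.2 x y z
    have hm := (hdef (-1)).2.1.2.2 x y z
    simp only [one_smul, neg_one_smul, hB2.1, hb2.1, negl _ hB2, negl _ hb2, neg_neg] at h1 hm
    exact key _ (by linear_combination (norm := abel1) h1 + hm - hJ2 x y z - hJ2 x y z)
  have mix : ∀ x y z : g, br2 x (ω1 y z) + br2 z (ω1 x y) - br2 y (ω1 x z)
      - ω1 (br2 x y) z - ω1 (br2 z x) y - ω1 (br2 y z) x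
      + br1 x (ω2 y z) + br1 z (ω2 x y) - br1 y (ω2 x z)
      - ω2 (br1 x y) z - ω2 (br1 z x) y - ω2 (br1 y z) x = 0 := by
    intro x y z
    have h1 := (hdef 1).2.2 x y z
    have hm := (hdef (-1)).2.2 x y z
    simp only [one_smul, neg_one_smul, hB1.1, hb1.1, hB2.1, hb2.1, negl _ hB1, negl _ hb1,
      negl _ hB2, negl _ hb2, neg_neg] at h1 hm
    have hB : br1 (ω2 x y) z + ω1 (br2 x y) z + br1 (ω2 y z) x + ω1 (br2 y z) x +
        br1 (ω2 z x) y + ω1 (br2 z x) y + br2 (ω1 x y) z + ω2 (br1 x y) z +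
        br2 (ω1 y z) x + ω2 (br1 y z) x + br2 (ω1 z x) y + ω2 (br1 z x) y = 0 :=
      key _ (by linear_combination (norm := abel1) h1 - hm)
    linear_combination (norm := abel1) -hB + skew br2 hB2 hA2 x (ω1 y z) +
      skew br2 hB2 hA2 z (ω1 x y) + e3g br2 ω1 hB2 hA2 hb1 ha1 z x y +
      skew br1 hB1 hA1 x (ω2 y z) + skew br1 hB1 hA1 z (ω2 x y) +
      e3g br1 ω2 hB1 hA1 hb2 ha2 z x y
  have compat : IsCompatPair ω1 ω2 := by
    intro x y z
    have h1 := (hdef 1).2.2 x y z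
    have hm := (hdef (-1)).2.2 x y z
    simp only [one_smul, neg_one_smul, hB1.1, hb1.1, hB2.1, hb2.1, negl _ hB1, negl _ hb1,
      negl _ hB2, negl _ hb2, neg_neg] at h1 hm
    exact key _ (by linear_combination (norm := abel1) h1 + hm - hC x y z - hC x y z)
  exact ⟨cocyc1, cocyc2, mix, ⟨hb1, ha1, jacw1⟩, ⟨hb2, ha2, jacw2⟩, compat⟩
end

section
/- Let (g,[-,-],{-,-}) be a compatible Lie algebra over a field K of characteristic 0 and let N : g → g be a Nijenhuis operator on (g,[-,-],{-,-}) (i.e. a Nijenhuis operator for both brackets). Define deformed brackets [x,y]_N = [N(x),y] + [x,N(y)] − N([x,y]) and {x,y}_N = {N(x),y} + {x,N(y)} − N({x,y}). Then (g, [-,-]_N, {-,-}_N) is a compatible Lie algebra and N is a compatible Lie algebra homomorphism from (g,[-,-]_N,{-,-}_N) to (g,[-,-],{-,-}), i.e. N([x,y]_N) = [N(x),N(y)] and N({x,y}_N) = {N(x),N(y)} for all x,y. -/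
/-- A Nijenhuis operator on the Lie algebra `(g, br)`: a linear map `N` with
`N([N x, y] + [x, N y] - N [x, y]) = [N x, N y]`. -/
def IsNijenhuis {K g : Type*} [Field K] [AddCommGroup g] [Module K g]
    (br : g → g → g) (N : g →ₗ[K] g) : Prop :=
  ∀ x y : g, N (br (N x) y + br x (N y) - N (br x y)) = br (N x) (N y)

/-- The deformed bracket. -/
def deform {K g : Type*} [Field K] [AddCommGroup g] [Module K g]
    (br : g → g → g) (N : g →ₗ[K] g) : g → g → g :=
  fun x y => br (N x) y + br x (N y) - N (br x y)

lemma br_sub_left {K g : Type*} [Field K] [AddCommGroup g] [Module K g]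
    {br : g → g → g}
    (hadd : ∀ a a' b, br (a + a') b = br a b + br a' b)
    (hsm : ∀ (c : K) (a b), br (c • a) b = c • br a b) :
    ∀ a a' b, br (a - a') b = br a b - br a' b := by
  intro a a' b
  have h := hadd (a - a') a' b
  rw [sub_add_cancel] at h
  exact (sub_eq_of_eq_add h).symm

/-- Jacobi identity for the deformed bracket. -/
lemma jacobi_deform {K g : Type*} [Field K] [AddCommGroup g] [Module K g]
    (br : g → g → g) (N : g →ₗ[K] g)
    (hadd : ∀ a a' b, br (a + a') b = br a b + br a' b)
    (hsub : ∀ a a' b, br (a - a') b = br a b - br a' b)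
    (hJ : ∀ x y z, br (br x y) z + br (br y z) x + br (br z x) y = 0)
    (hN : ∀ x y, N (br (N x) y + br x (N y) - N (br x y)) = br (N x) (N y))
    (x y z : g) :
    deform br N (deform br N x y) z + deform br N (deform br N y z) x +
      deform br N (deform br N z x) y = 0 := by
  have key : ∀ a b, N (br (N a) b) + N (br a (N b)) - N (N (br a b))
      = br (N a) (N b) := by
    intro a b
    have h := hN a b
    rw [map_sub, map_add] at h
    exact h
  have NJ : ∀ a b c, N (br (br a b) c) + N (br (br b c) a) + N (br (br c a) b) = 0 := by
    intro a b c
    have h := congrArg N (hJ a b c)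
    rw [map_add, map_add, map_zero] at h
    exact h
  have NNJ : N (N (br (br x y) z)) + N (N (br (br y z) x)) + N (N (br (br z x) y)) = 0 := by
    have h := congrArg N (NJ x y z)
    rw [map_add, map_add, map_zero] at h
    exact h
  simp only [deform]
  rw [hN x y, hN y z, hN z x]
  simp only [hadd, hsub, map_add, map_sub]
  linear_combination (norm := abel)
    hJ (N x) y (N z) + hJ x (N y) (N z) + hJ (N x) (N y) z +
    key (br x y) z + key (br y z) x + key (br z x) y -
    NJ (N x) y z - NJ x (N y) z - NJ x y (N z) + NNJ

/-- Bilinearity of the deformed bracket. -/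
lemma bilin_deform {K g : Type*} [Field K] [AddCommGroup g] [Module K g]
    (br : g → g → g) (N : g →ₗ[K] g) (hb : IsBilin K br) :
    IsBilin K (deform br N) := by
  obtain ⟨h1, h2, h3, h4⟩ := hb
  refine ⟨?_, ?_, ?_, ?_⟩
  · intro a a' b
    simp only [deform, map_add, h1, h3]
    abel
  · intro c a b
    simp only [deform, map_smul, h2]
    rw [smul_sub, smul_add]
  · intro a b b'
    simp only [deform, map_add, h1, h3]
    abel
  · intro c a b
    simp only [deform, map_smul, h4]
    rw [smul_sub, smul_add]

lemma antisym {K g : Type*} [Field K] [AddCommGroup g] [Module K g]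
    {br : g → g → g} (hb : IsBilin K br) (halt : ∀ x, br x x = 0) :
    ∀ a b, br a b + br b a = 0 := by
  intro a b
  have h := halt (a + b)
  rw [hb.1, hb.2.2.1, hb.2.2.1, halt, halt] at h
  linear_combination (norm := abel) h

/-- The deformed bracket of a Lie bracket is a Lie bracket. -/
lemma lie_deform {K g : Type*} [Field K] [AddCommGroup g] [Module K g]
    (br : g → g → g) (N : g →ₗ[K] g) (hl : IsLieBr K br)
    (hN : IsNijenhuis br N) : IsLieBr K (deform br N) := by
  obtain ⟨hb, halt, hJ⟩ := hl
  refine ⟨bilin_deform br N hb, ?_, ?_⟩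
  · intro x
    show br (N x) x + br x (N x) - N (br x x) = 0
    rw [halt, map_zero, sub_zero]
    exact antisym hb halt (N x) x
  · intro x y z
    exact jacobi_deform br N hb.1 (br_sub_left hb.1 hb.2.1) hJ hN x y z

/-- If `N` is a Nijenhuis operator on a compatible Lie algebra
`(g, br1, br2)` (for both brackets), then the deformed brackets `[x,y]_N` and `{x,y}_N`
form a compatible Lie algebra, and `N` is a compatible Lie algebra homomorphism from the
deformed structure to the original one. -/
theorem nijenhuis_deformed_compatible {K g : Type*} [Field K] [CharZero K]
    [AddCommGroup g] [Module K g] (br1 br2 : g → g → g)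
    (hc : IsCompatLie K br1 br2) (N : g →ₗ[K] g)
    (hN1 : IsNijenhuis br1 N) (hN2 : IsNijenhuis br2 N) :
    IsCompatLie K (fun x y => br1 (N x) y + br1 x (N y) - N (br1 x y))
        (fun x y => br2 (N x) y + br2 x (N y) - N (br2 x y)) ∧
    (∀ x y : g, N (br1 (N x) y + br1 x (N y) - N (br1 x y)) = br1 (N x) (N y)) ∧
    (∀ x y : g, N (br2 (N x) y + br2 x (N y) - N (br2 x y)) = br2 (N x) (N y)) := by
  obtain ⟨hl1, hl2, hcomp⟩ := hc
  obtain ⟨hb1, halt1, hJ1⟩ := hl1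
  obtain ⟨hb2, halt2, hJ2⟩ := hl2
  refine ⟨⟨lie_deform br1 N ⟨hb1, halt1, hJ1⟩ hN1,
          lie_deform br2 N ⟨hb2, halt2, hJ2⟩ hN2, ?_⟩, hN1, hN2⟩
  -- compatibility of the deformed pair, via the sum bracket
  set brS : g → g → g := fun a b => br1 a b + br2 a b with hbrS
  have haddS : ∀ a a' b, brS (a + a') b = brS a b + brS a' b := by
    intro a a' b
    simp only [hbrS, hb1.1, hb2.1]
    abel
  have hsubS : ∀ a a' b, brS (a - a') b = brS a b - brS a' b := by
    intro a a' b
    simp only [hbrS, br_sub_left hb1.1 hb1.2.1, br_sub_left hb2.1 hb2.2.1]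
    abel
  have hJS : ∀ x y z, brS (brS x y) z + brS (brS y z) x + brS (brS z x) y = 0 := by
    intro x y z
    simp only [hbrS, hb1.1, hb2.1]
    linear_combination (norm := abel) hJ1 x y z + hJ2 x y z + hcomp x y z
  have hNS : ∀ x y, N (brS (N x) y + brS x (N y) - N (brS x y)) = brS (N x) (N y) := by
    intro x y
    have harg : brS (N x) y + brS x (N y) - N (brS x y)
        = (br1 (N x) y + br1 x (N y) - N (br1 x y))
          + (br2 (N x) y + br2 x (N y) - N (br2 x y)) := by
      simp only [hbrS, map_add]
      abel
    rw [harg, map_add, hN1, hN2]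
  have hDS : ∀ a b, deform brS N a b = deform br1 N a b + deform br2 N a b := by
    intro a b
    simp only [deform, hbrS, map_add]
    abel
  have hD1add : ∀ a a' b, deform br1 N (a + a') b = deform br1 N a b + deform br1 N a' b :=
    (bilin_deform br1 N hb1).1
  have hD2add : ∀ a a' b, deform br2 N (a + a') b = deform br2 N a b + deform br2 N a' b :=
    (bilin_deform br2 N hb2).1
  have hJD1 := fun x y z => jacobi_deform br1 N hb1.1 (br_sub_left hb1.1 hb1.2.1) hJ1 hN1 x y z
  have hJD2 := fun x y z => jacobi_deform br2 N hb2.1 (br_sub_left hb2.1 hb2.2.1) hJ2 hN2 x y z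
  intro x y z
  have hS := jacobi_deform brS N haddS hsubS hJS hNS x y z
  simp only [hDS, hD1add, hD2add] at hS
  show deform br1 N (deform br2 N x y) z + deform br1 N (deform br2 N y z) x +
      deform br1 N (deform br2 N z x) y + deform br2 N (deform br1 N x y) z +
      deform br2 N (deform br1 N y z) x + deform br2 N (deform br1 N z x) y = 0
  linear_combination (norm := abel) hS - hJD1 x y z - hJD2 x y z
end

section
/- Let (g,[-,-],{-,-}) be a compatible Lie algebra over a field K of characteristic 0, let (ω_1,ω_2) generate an infinitesimal deformation (g,[-,-]_t,{-,-}_t), and let N : g → g be a linear map. Then Id + tN is a compatible Lie algebra homomorphism from (g,[-,-]_t,{-,-}_t) to (g,[-,-],{-,-}) for every t ∈ K if and only if for all x,y in g: (1) ω_1(x,y) = [x,N(y)] + [N(x),y] − N([x,y]); (2) N(ω_1(x,y)) = [N(x),N(y)]; (3) ω_2(x,y) = {x,N(y)} + {N(x),y} − N({x,y}); (4) N(ω_2(x,y)) = {N(x),N(y)}. In particular, the deformation is trivial exactly when it is generated as above by a Nijenhuis operator N on (g,[-,-],{-,-}). -/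
lemma expand_aux {K g : Type*} [Field K] [AddCommGroup g] [Module K g]
    (br : g → g → g) (hb : IsBilin K br) (N : g →ₗ[K] g) (t : K) (x y : g) :
    br (x + t • N x) (y + t • N y)
      = br x y + t • (br x (N y) + br (N x) y) + (t*t) • br (N x) (N y) := by
  obtain ⟨h1, h2, h3, h4⟩ := hb
  rw [h1, h3, h3, h2, h2, h4, h4]
  module

lemma quad_aux {K g : Type*} [Field K] [CharZero K] [AddCommGroup g] [Module K g]
    (a b : g) (h : ∀ t : K, t • a + (t*t) • b = 0) : a = 0 ∧ b = 0 := by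
  have h1 := h 1
  have h2 := h (-1)
  simp only [one_smul, mul_one, neg_smul, neg_mul, neg_neg, one_mul, neg_one_mul] at h1 h2
  have hb : (2 : K) • b = 0 := by
    have := congrArg₂ (· + ·) h1 h2
    simpa [two_smul] using by linear_combination (norm := module) h1 + h2
  have hb0 : b = 0 := by
    rcases smul_eq_zero.mp hb with h | h
    · exact absurd h two_ne_zero
    · exact h
  refine ⟨?_, hb0⟩
  have := h1
  rw [hb0, add_zero] at this
  exact this

/-- An infinitesimal deformation of a compatible Lie algebra
`(g, br1, br2)` generated by `(ω₁, ω₂)` is trivialized by `Id + tN` (i.e. `Id + tN` is a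
compatible Lie algebra homomorphism from the deformed structure to the original one for all
`t`) iff the four conditions hold, which say exactly that `(ω₁, ω₂)` is generated by the
Nijenhuis operator `N`. -/
theorem trivial_deformation_iff_nijenhuis {K g : Type*} [Field K] [CharZero K]
    [AddCommGroup g] [Module K g] (br1 br2 ω1 ω2 : g → g → g)
    (hc : IsCompatLie K br1 br2)
    (hb1 : IsBilin K ω1) (hb2 : IsBilin K ω2) (ha1 : ∀ x, ω1 x x = 0) (ha2 : ∀ x, ω2 x x = 0)
    (hdef : ∀ t : K, IsCompatLie K (fun x y => br1 x y + t • ω1 x y)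
      (fun x y => br2 x y + t • ω2 x y))
    (N : g →ₗ[K] g) :
    (∀ t : K, ∀ x y : g,
      ((br1 x y + t • ω1 x y) + t • N (br1 x y + t • ω1 x y)
          = br1 (x + t • N x) (y + t • N y)) ∧
      ((br2 x y + t • ω2 x y) + t • N (br2 x y + t • ω2 x y)
          = br2 (x + t • N x) (y + t • N y))) ↔
    (∀ x y : g,
      (ω1 x y = br1 x (N y) + br1 (N x) y - N (br1 x y)) ∧
      (N (ω1 x y) = br1 (N x) (N y)) ∧
      (ω2 x y = br2 x (N y) + br2 (N x) y - N (br2 x y)) ∧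
      (N (ω2 x y) = br2 (N x) (N y))) := by
  constructor
  · intro H x y
    have key1 : ∀ t : K,
        t • (ω1 x y + N (br1 x y) - (br1 x (N y) + br1 (N x) y))
          + (t*t) • (N (ω1 x y) - br1 (N x) (N y)) = 0 := by
      intro t
      have h := (H t x y).1
      rw [expand_aux br1 hc.1.1 N, map_add, map_smul] at h
      linear_combination (norm := module) h
    have key2 : ∀ t : K,
        t • (ω2 x y + N (br2 x y) - (br2 x (N y) + br2 (N x) y))
          + (t*t) • (N (ω2 x y) - br2 (N x) (N y)) = 0 := by
      intro t
      have h := (H t x y).2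
      rw [expand_aux br2 hc.2.1.1 N, map_add, map_smul] at h
      linear_combination (norm := module) h
    obtain ⟨a1, b1⟩ := quad_aux _ _ key1
    obtain ⟨a2, b2⟩ := quad_aux _ _ key2
    refine ⟨?_, ?_, ?_, ?_⟩
    · linear_combination (norm := module) a1
    · linear_combination (norm := module) b1
    · linear_combination (norm := module) a2
    · linear_combination (norm := module) b2
  · intro h t x y
    constructor
    · rw [expand_aux br1 hc.1.1 N, map_add, map_smul, (h x y).2.1, (h x y).1]
      module
    · rw [expand_aux br2 hc.2.1.1 N, map_add, map_smul, (h x y).2.2.2, (h x y).2.2.1]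
      module
end

section
/- Let N be a Nijenhuis operator on a compatible Lie algebra (g,[-,-],{-,-}) over a field K of characteristic 0, and define ω_1(x,y) = [x,N(y)] + [N(x),y] − N([x,y]) and ω_2(x,y) = {x,N(y)} + {N(x),y} − N({x,y}). Then for every t ∈ K the brackets [x,y]_t = [x,y] + t·ω_1(x,y) and {x,y}_t = {x,y} + t·ω_2(x,y) define a compatible Lie algebra (so (ω_1,ω_2) generates an infinitesimal deformation of (g,[-,-],{-,-})), and this deformation is trivial: for every t ∈ K, Id + tN is a compatible Lie algebra homomorphism from (g,[-,-]_t,{-,-}_t) to (g,[-,-],{-,-}). -/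
section Aux
variable {K g : Type*} [Field K] [AddCommGroup g] [Module K g]

theorem IsBilin.subl {P : g → g → g} (h : IsBilin K P) (a a' c : g) :
    P (a - a') c = P a c - P a' c := by
  have h1 := h.1 (a - a') a' c
  rw [show a - a' + a' = a from by abel] at h1
  linear_combination (norm := module) -h1

theorem IsBilin.subr {P : g → g → g} (h : IsBilin K P) (c a a' : g) :
    P c (a - a') = P c a - P c a' := by
  have h1 := h.2.2.1 c (a - a') a'
  rw [show a - a' + a' = a from by abel] at h1
  linear_combination (norm := module) -h1

/-- the deformation cocycle -/
def omB (P : g → g → g) (N : g →ₗ[K] g) : g → g → g :=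
  fun x y => P x (N y) + P (N x) y - N (P x y)

theorem omB_bilin {P : g → g → g} (N : g →ₗ[K] g) (h : IsBilin K P) :
    IsBilin K (omB P N) := by
  refine ⟨?_, ?_, ?_, ?_⟩
  · intro a a' c
    simp only [omB, map_add, h.1]
    module
  · intro c a a'
    simp only [omB, map_smul, h.2.1]
    module
  · intro a c c'
    simp only [omB, map_add, h.2.2.1]
    module
  · intro c a a'
    simp only [omB, map_smul, h.2.2.2]
    module

theorem claSkew {P : g → g → g} (hb : IsLieBr K P) (a c : g) :
    P a c = - P c a := by
  have h0 := hb.2.1 (a + c)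
  rw [hb.1.1 a c (a + c), hb.1.2.2.1 a a c, hb.1.2.2.1 c a c,
    hb.2.1 a, hb.2.1 c] at h0
  linear_combination (norm := module) h0

theorem omB_alt {P : g → g → g} (N : g →ₗ[K] g) (hb : IsLieBr K P) (x : g) :
    omB P N x x = 0 := by
  simp only [omB, hb.2.1, map_zero, sub_zero]
  rw [claSkew hb x (N x)]
  abel

theorem lemM {P Q : g → g → g} (N : g →ₗ[K] g) (hbP : IsBilin K P)
    (hbQ : IsBilin K Q) (hcp : IsCompatPair P Q) (x y z : g) :
    (P (omB Q N x y) z + P (omB Q N y z) x + P (omB Q N z x) y +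
     omB Q N (P x y) z + omB Q N (P y z) x + omB Q N (P z x) y) +
    (Q (omB P N x y) z + Q (omB P N y z) x + Q (omB P N z x) y +
     omB P N (Q x y) z + omB P N (Q y z) x + omB P N (Q z x) y) = 0 := by
  have f1 := hcp (N x) y z
  have f2 := hcp x (N y) z
  have f3 := hcp x y (N z)
  have gg := congrArg N (hcp x y z)
  simp only [map_add, map_zero] at gg
  simp only [omB, hbP.subl, hbQ.subl, hbP.1, hbQ.1, map_add, map_sub]
  linear_combination (norm := module) f1 + f2 + f3 - gg

theorem lemE {P Q : g → g → g} (N : g →ₗ[K] g) (hbP : IsBilin K P)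
    (hbQ : IsBilin K Q) (hcp : IsCompatPair P Q)
    (hNP : IsNijenhuis P N) (hNQ : IsNijenhuis Q N) (x y z : g) :
    (omB P N (omB Q N x y) z + omB P N (omB Q N y z) x + omB P N (omB Q N z x) y) +
    (omB Q N (omB P N x y) z + omB Q N (omB P N y z) x + omB Q N (omB P N z x) y)
      = 0 := by
  have a1 := congrArg (fun u => P u z) (hNQ x y)
  have a2 := congrArg (fun u => P u x) (hNQ y z)
  have a3 := congrArg (fun u => P u y) (hNQ z x)
  have b1 := congrArg (fun u => Q u z) (hNP x y)
  have b2 := congrArg (fun u => Q u x) (hNP y z)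
  have b3 := congrArg (fun u => Q u y) (hNP z x)
  simp only [map_add, map_sub, hbP.1, hbP.subl, hbQ.1, hbQ.subl] at a1 a2 a3 b1 b2 b3
  have c1 := hNP (Q x y) z
  have c2 := hNP (Q y z) x
  have c3 := hNP (Q z x) y
  have d1 := hNQ (P x y) z
  have d2 := hNQ (P y z) x
  have d3 := hNQ (P z x) y
  simp only [map_add, map_sub] at c1 c2 c3 d1 d2 d3
  have f1 := hcp (N x) (N y) z
  have f2 := hcp (N x) y (N z)
  have f3 := hcp x (N y) (N z)
  have g1 := congrArg N (hcp x y (N z))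
  have g2 := congrArg N (hcp (N x) y z)
  have g3 := congrArg N (hcp x (N y) z)
  have k1 := congrArg (fun u => N (N u)) (hcp x y z)
  simp only [map_add, map_zero] at g1 g2 g3 k1
  simp only [omB, hbP.subl, hbQ.subl, hbP.1, hbQ.1, map_add, map_sub]
  linear_combination (norm := module) a1 + a2 + a3 + b1 + b2 + b3 + c1 + c2 + c3 +
    d1 + d2 + d3 + f1 + f2 + f3 - g1 - g2 - g3 + k1

theorem half_zero [CharZero K] {x : g} (h : x + x = 0) : x = 0 := by
  have h2 : (2 : K) • x = 0 := by rw [two_smul]; exact h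
  rcases smul_eq_zero.mp h2 with h' | h'
  · exact absurd h' two_ne_zero
  · exact h'

theorem deform_lie {b w : g → g → g} (hb : IsLieBr K b) (hw : IsLieBr K w)
    (hmix : ∀ x y z, b (w x y) z + b (w y z) x + b (w z x) y +
      w (b x y) z + w (b y z) x + w (b z x) y = 0) (t : K) :
    IsLieBr K (fun x y => b x y + t • w x y) := by
  obtain ⟨⟨ba, bs, ba', bs'⟩, balt, bj⟩ := hb
  obtain ⟨⟨wa, ws, wa', ws'⟩, walt, wj⟩ := hw
  refine ⟨⟨?_, ?_, ?_, ?_⟩, ?_, ?_⟩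
  · intro a a' c; simp only [ba, wa]; module
  · intro c a a'; simp only [bs, ws]; module
  · intro a c c'; simp only [ba', wa']; module
  · intro c a a'; simp only [bs', ws']; module
  · intro a; simp only [balt, walt, smul_zero, add_zero]
  · intro x y z
    simp only [ba, bs, wa, ws]
    linear_combination (norm := module) bj x y z + t • hmix x y z + (t*t) • wj x y z

theorem deform_compat {b1 b2 w1 w2 : g → g → g} (hb1 : IsBilin K b1)
    (hb2 : IsBilin K b2) (hw1 : IsBilin K w1) (hw2 : IsBilin K w2)
    (hcp : IsCompatPair b1 b2)
    (hM : ∀ x y z, (b1 (w2 x y) z + b1 (w2 y z) x + b1 (w2 z x) y +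
       w2 (b1 x y) z + w2 (b1 y z) x + w2 (b1 z x) y) +
      (b2 (w1 x y) z + b2 (w1 y z) x + b2 (w1 z x) y +
       w1 (b2 x y) z + w1 (b2 y z) x + w1 (b2 z x) y) = 0)
    (hE : ∀ x y z, (w1 (w2 x y) z + w1 (w2 y z) x + w1 (w2 z x) y) +
      (w2 (w1 x y) z + w2 (w1 y z) x + w2 (w1 z x) y) = 0) (t : K) :
    IsCompatPair (fun x y => b1 x y + t • w1 x y)
      (fun x y => b2 x y + t • w2 x y) := by
  intro x y z
  simp only [hb1.1, hb1.2.1, hb2.1, hb2.2.1, hw1.1, hw1.2.1, hw2.1, hw2.2.1]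
  linear_combination (norm := module) hcp x y z + t • hM x y z + (t*t) • hE x y z

end Aux

/-- A Nijenhuis operator `N` on a compatible Lie algebra `(g, br1, br2)`
generates an infinitesimal deformation via `ω₁(x,y) = [x,Ny] + [Nx,y] - N[x,y]` and
`ω₂(x,y) = {x,Ny} + {Nx,y} - N{x,y}`: for every `t` the deformed brackets form a compatible
Lie algebra, and this deformation is trivial, `Id + tN` being a compatible Lie algebra
homomorphism from the deformed structure to the original one. -/
theorem nijenhuis_generates_trivial_deformation {K g : Type*} [Field K] [CharZero K]
    [AddCommGroup g] [Module K g] (br1 br2 : g → g → g)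
    (hc : IsCompatLie K br1 br2) (N : g →ₗ[K] g)
    (hN1 : IsNijenhuis br1 N) (hN2 : IsNijenhuis br2 N) :
    (∀ t : K, IsCompatLie K
        (fun x y => br1 x y + t • (br1 x (N y) + br1 (N x) y - N (br1 x y)))
        (fun x y => br2 x y + t • (br2 x (N y) + br2 (N x) y - N (br2 x y)))) ∧
    (∀ t : K, ∀ x y : g,
      ((br1 x y + t • (br1 x (N y) + br1 (N x) y - N (br1 x y)))
          + t • N (br1 x y + t • (br1 x (N y) + br1 (N x) y - N (br1 x y)))
          = br1 (x + t • N x) (y + t • N y)) ∧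
      ((br2 x y + t • (br2 x (N y) + br2 (N x) y - N (br2 x y)))
          + t • N (br2 x y + t • (br2 x (N y) + br2 (N x) y - N (br2 x y)))
          = br2 (x + t • N x) (y + t • N y))) := by
  obtain ⟨hb1, hb2, hcp⟩ := hc
  have hw1b : IsBilin K (omB br1 N) := omB_bilin N hb1.1
  have hw2b : IsBilin K (omB br2 N) := omB_bilin N hb2.1
  have hcp11 : IsCompatPair br1 br1 := fun x y z => by
    linear_combination (norm := module) (2 : K) • hb1.2.2 x y z
  have hcp22 : IsCompatPair br2 br2 := fun x y z => by
    linear_combination (norm := module) (2 : K) • hb2.2.2 x y z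
  have hmix1 : ∀ x y z : g, br1 (omB br1 N x y) z + br1 (omB br1 N y z) x +
      br1 (omB br1 N z x) y + omB br1 N (br1 x y) z + omB br1 N (br1 y z) x +
      omB br1 N (br1 z x) y = 0 :=
    fun x y z => half_zero (K := K) (lemM N hb1.1 hb1.1 hcp11 x y z)
  have hmix2 : ∀ x y z : g, br2 (omB br2 N x y) z + br2 (omB br2 N y z) x +
      br2 (omB br2 N z x) y + omB br2 N (br2 x y) z + omB br2 N (br2 y z) x +
      omB br2 N (br2 z x) y = 0 :=
    fun x y z => half_zero (K := K) (lemM N hb2.1 hb2.1 hcp22 x y z)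
  have hjw1 : ∀ x y z : g, omB br1 N (omB br1 N x y) z + omB br1 N (omB br1 N y z) x +
      omB br1 N (omB br1 N z x) y = 0 :=
    fun x y z => half_zero (K := K) (lemE N hb1.1 hb1.1 hcp11 hN1 hN1 x y z)
  have hjw2 : ∀ x y z : g, omB br2 N (omB br2 N x y) z + omB br2 N (omB br2 N y z) x +
      omB br2 N (omB br2 N z x) y = 0 :=
    fun x y z => half_zero (K := K) (lemE N hb2.1 hb2.1 hcp22 hN2 hN2 x y z)
  have hw1 : IsLieBr K (omB br1 N) := ⟨hw1b, omB_alt N hb1, hjw1⟩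
  have hw2 : IsLieBr K (omB br2 N) := ⟨hw2b, omB_alt N hb2, hjw2⟩
  constructor
  · intro t
    refine ⟨deform_lie hb1 hw1 hmix1 t, deform_lie hb2 hw2 hmix2 t, ?_⟩
    exact deform_compat hb1.1 hb2.1 hw1b hw2b hcp (lemM N hb1.1 hb2.1 hcp)
      (lemE N hb1.1 hb2.1 hcp hN1 hN2) t
  · intro t x y
    constructor
    · have h := hN1 x y
      simp only [map_add, map_sub] at h
      simp only [map_add, map_sub, map_smul, hb1.1.1, hb1.1.2.1, hb1.1.2.2.1,
        hb1.1.2.2.2]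
      linear_combination (norm := module) (t * t) • h
    · have h := hN2 x y
      simp only [map_add, map_sub] at h
      simp only [map_add, map_sub, map_smul, hb2.1.1, hb2.1.2.1, hb2.1.2.2.1,
        hb2.1.2.2.2]
      linear_combination (norm := module) (t * t) • h
end

section
/- Let (ĝ,[-,-]_ĝ,{-,-}_ĝ) be a compatible Lie algebra over a field K of characteristic 0, let (g,[-,-]_g,{-,-}_g) be a compatible Lie algebra, and let p : ĝ → g be a surjective compatible Lie algebra homomorphism whose kernel h satisfies [u,v]_ĝ = 0 and {u,v}_ĝ = 0 for all u,v ∈ h (an abelian extension of g by h). Let σ : g → ĝ be a linear map with p ∘ σ = Id. Define ρ(x)v = [σ(x),v]_ĝ and μ(x)v = {σ(x),v}_ĝ for x ∈ g, v ∈ h, and ω_1(x,y) = [σ(x),σ(y)]_ĝ − σ([x,y]_g), ω_2(x,y) = {σ(x),σ(y)}_ĝ − σ({x,y}_g). Then: (1) ρ(x)v and μ(x)v take values in h and do not depend on the choice of the section σ; (2) (h; ρ, μ) is a representation of the compatible Lie algebra g; (3) ω_1 and ω_2 take values in h, ω_1 is a Chevalley–Eilenberg 2-cocycle of (g,[-,-]_g)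 with coefficients in (h;ρ), ω_2 is a Chevalley–Eilenberg 2-cocycle of (g,{-,-}_g) with coefficients in (h;μ), and the mixed cocycle condition d2 ω_1 + d1 ω_2 = 0 holds, where d1, d2 denote the Chevalley–Eilenberg coboundaries with coefficients in ρ and μ respectively. -/
section Helpers

variable {K V : Type*} [Field K] [AddCommGroup V] [Module K V]

lemma IsBilin.negL {f : V → V → V} (h : IsBilin K f) (a b : V) :
    f (-a) b = - f a b := by
  have := h.2.1 (-1 : K) a b
  rwa [neg_one_smul, neg_one_smul] at this

lemma IsBilin.negR {f : V → V → V} (h : IsBilin K f) (a b : V) :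
    f a (-b) = - f a b := by
  have := h.2.2.2 (-1 : K) a b
  rwa [neg_one_smul, neg_one_smul] at this

lemma IsBilin.zeroR {f : V → V → V} (h : IsBilin K f) (a : V) : f a 0 = 0 := by
  have := h.2.2.2 (0 : K) a 0
  rwa [zero_smul, zero_smul] at this

lemma IsBilin.subL {f : V → V → V} (h : IsBilin K f) (a a' b : V) :
    f (a - a') b = f a b - f a' b := by
  rw [sub_eq_add_neg, h.1, h.negL, ← sub_eq_add_neg]

lemma IsBilin.subR {f : V → V → V} (h : IsBilin K f) (a b b' : V) :
    f a (b - b') = f a b - f a b' := by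
  rw [sub_eq_add_neg, h.2.2.1, h.negR, ← sub_eq_add_neg]

lemma IsLieBr.anti {f : V → V → V} (h : IsLieBr K f) (a b : V) :
    f a b = - f b a := by
  have h0 := h.2.1 (a + b)
  rw [h.1.1, h.1.2.2.1, h.1.2.2.1, h.2.1 a, h.2.1 b] at h0
  linear_combination (norm := module) h0

lemma IsLieBr.jacobi2 {f : V → V → V} (h : IsLieBr K f) (a b c : V) :
    f a (f b c) - f b (f a c) + f c (f a b) = 0 := by
  have j := h.2.2 a b c
  have e1 := h.anti a (f b c)
  have e2 := h.anti b (f a c)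
  have e3 := h.anti c (f a b)
  have e4 : f (f a c) b = - f (f c a) b := by rw [h.anti a c, h.1.negL]
  linear_combination (norm := module) e1 - e2 + e3 - j + e4

lemma IsLieBr.leibniz {f : V → V → V} (h : IsLieBr K f) (a b c : V) :
    f (f a b) c = f a (f b c) - f b (f a c) := by
  have j := h.2.2 a b c
  have e1 := h.anti a (f b c)
  have e2 := h.anti b (f a c)
  have e4 : f (f a c) b = - f (f c a) b := by rw [h.anti a c, h.1.negL]
  linear_combination (norm := module) j - e1 + e2 - e4

lemma IsLieBr.jacobi1 {f : V → V → V} (h : IsLieBr K f) (x y z : V) :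
    f (f x y) z - f (f x z) y + f (f y z) x = 0 := by
  have j := h.2.2 x y z
  have e : f (f x z) y = - f (f z x) y := by rw [h.anti x z, h.1.negL]
  linear_combination (norm := module) j - e

lemma compat_second {f h : V → V → V} (hf : IsLieBr K f) (hh : IsLieBr K h)
    (hc : IsCompatPair f h) (a b c : V) :
    f a (h b c) - f b (h a c) + f c (h a b) +
      h a (f b c) - h b (f a c) + h c (f a b) = 0 := by
  have j := hc a b c
  have e1 := hf.anti a (h b c)
  have e2d : f b (h a c) = f (h c a) b := by
    rw [hf.anti b (h a c), hh.anti a c, hf.1.negL, neg_neg]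
  have e3 := hf.anti c (h a b)
  have e4 := hh.anti a (f b c)
  have e5d : h b (f a c) = h (f c a) b := by
    rw [hh.anti b (f a c), hf.anti a c, hh.1.negL, neg_neg]
  have e6 := hh.anti c (f a b)
  linear_combination (norm := module) e1 - e2d + e3 + e4 - e5d + e6 - j

lemma compat_first {f h : V → V → V} (hf : IsLieBr K f) (hh : IsLieBr K h)
    (hc : IsCompatPair f h) (x y z : V) :
    f (h x y) z - f (h x z) y + f (h y z) x +
      h (f x y) z - h (f x z) y + h (f y z) x = 0 := by
  have j := hc x y z
  have eA : f (h x z) y = - f (h z x) y := by rw [hh.anti x z, hf.1.negL]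
  have eB : h (f x z) y = - h (f z x) y := by rw [hf.anti x z, hh.1.negL]
  linear_combination (norm := module) j - eA - eB

lemma compat_leibniz {f h : V → V → V} (hf : IsLieBr K f) (hh : IsLieBr K h)
    (hc : IsCompatPair f h) (a b c : V) :
    f (h a b) c + h (f a b) c =
      f a (h b c) - h b (f a c) + h a (f b c) - f b (h a c) := by
  have s := compat_second hf hh hc a b c
  have e3 := hf.anti c (h a b)
  have e6 := hh.anti c (f a b)
  linear_combination (norm := module) e3 + e6 - s

lemma ker_congr {K g E : Type*} [Field K] [AddCommGroup g] [Module K g]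
    [AddCommGroup E] [Module K E] {Br : E → E → E} (hb : IsBilin K Br)
    (p : E →ₗ[K] g) (hab : ∀ u v : E, p u = 0 → p v = 0 → Br u v = 0)
    {a a' v : E} (h : p a = p a') (hv : p v = 0) : Br a v = Br a' v := by
  have h0 : Br (a - a') v = 0 := hab _ _ (by rw [map_sub, h, sub_self]) hv
  rw [hb.subL] at h0
  exact sub_eq_zero.mp h0

end Helpers

/-- Let `p : E → g` be an abelian extension of compatible Lie algebras
(a surjective compatible Lie algebra homomorphism whose kernel `h = ker p` has trivial
brackets) and let `σ` be a linear section of `p`. Define `ρ(x)v = [σx, v]`,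
`μ(x)v = {σx, v}`, `ω₁(x,y) = [σx, σy] - σ[x,y]` and `ω₂(x,y) = {σx, σy} - σ{x,y}`.
Then: (1) `ρ(x)v, μ(x)v ∈ h` for `v ∈ h`, and they are independent of the choice of
section; (2) `(h; ρ, μ)` is a representation of the compatible Lie algebra `g`
(the structural representation identities hold on kernel elements, and each `ρ(x)`, `μ(x)`
is linear, `ρ`, `μ` being linear in `x`); (3) `ω₁, ω₂` take values in `h`, `ω₁` is a
Chevalley–Eilenberg 2-cocycle for `(br1, ρ)`, `ω₂` is one for `(br2, μ)`, and the mixed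
cocycle condition `d₂ω₁ + d₁ω₂ = 0` holds. -/
theorem abelian_extension_section_data {K g E : Type*} [Field K] [CharZero K]
    [AddCommGroup g] [Module K g] [AddCommGroup E] [Module K E]
    (br1 br2 : g → g → g) (Br1 Br2 : E → E → E)
    (hg : IsCompatLie K br1 br2) (hE : IsCompatLie K Br1 Br2)
    (p : E →ₗ[K] g) (hsurj : Function.Surjective p)
    (hp1 : ∀ a b : E, p (Br1 a b) = br1 (p a) (p b))
    (hp2 : ∀ a b : E, p (Br2 a b) = br2 (p a) (p b))
    (hab1 : ∀ u v : E, p u = 0 → p v = 0 → Br1 u v = 0)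
    (hab2 : ∀ u v : E, p u = 0 → p v = 0 → Br2 u v = 0)
    (σ : g →ₗ[K] E) (hσ : ∀ x : g, p (σ x) = x)
    (ρ μ : g → E → E) (ω1 ω2 : g → g → E)
    (hρ : ρ = fun x v => Br1 (σ x) v) (hμ : μ = fun x v => Br2 (σ x) v)
    (hω1 : ω1 = fun x y => Br1 (σ x) (σ y) - σ (br1 x y))
    (hω2 : ω2 = fun x y => Br2 (σ x) (σ y) - σ (br2 x y)) :
    -- (1) `ρ` and `μ` preserve the kernel `h` and do not depend on the section:
    ((∀ (x : g) (v : E), p v = 0 → p (ρ x v) = 0 ∧ p (μ x v) = 0) ∧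
      (∀ σ' : g →ₗ[K] E, (∀ x : g, p (σ' x) = x) →
        ∀ (x : g) (v : E), p v = 0 → ρ x v = Br1 (σ' x) v ∧ μ x v = Br2 (σ' x) v)) ∧
    -- (2) `(h; ρ, μ)` is a representation of the compatible Lie algebra `g`:
    ((∀ x : g, IsLinearMap K (ρ x)) ∧ (∀ x : g, IsLinearMap K (μ x)) ∧
      (∀ (x y : g) (v : E), ρ (x + y) v = ρ x v + ρ y v) ∧
      (∀ (c : K) (x : g) (v : E), ρ (c • x) v = c • ρ x v) ∧
      (∀ (x y : g) (v : E), μ (x + y) v = μ x v + μ y v) ∧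
      (∀ (c : K) (x : g) (v : E), μ (c • x) v = c • μ x v) ∧
      (∀ (x y : g) (v : E), p v = 0 → ρ (br1 x y) v = ρ x (ρ y v) - ρ y (ρ x v)) ∧
      (∀ (x y : g) (v : E), p v = 0 → μ (br2 x y) v = μ x (μ y v) - μ y (μ x v)) ∧
      (∀ (x y : g) (v : E), p v = 0 →
        ρ (br2 x y) v + μ (br1 x y) v =
          ρ x (μ y v) - μ y (ρ x v) + μ x (ρ y v) - ρ y (μ x v))) ∧
    -- (3) `(ω₁, ω₂)` is an `h`-valued 2-cocycle pair:
    ((∀ x y : g, p (ω1 x y) = 0 ∧ p (ω2 x y) = 0) ∧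
      (∀ x y z : g,
        ρ x (ω1 y z) - ρ y (ω1 x z) + ρ z (ω1 x y)
          - ω1 (br1 x y) z + ω1 (br1 x z) y - ω1 (br1 y z) x = 0) ∧
      (∀ x y z : g,
        μ x (ω2 y z) - μ y (ω2 x z) + μ z (ω2 x y)
          - ω2 (br2 x y) z + ω2 (br2 x z) y - ω2 (br2 y z) x = 0) ∧
      (∀ x y z : g,
        μ x (ω1 y z) - μ y (ω1 x z) + μ z (ω1 x y)
          - ω1 (br2 x y) z + ω1 (br2 x z) y - ω1 (br2 y z) x
        + ρ x (ω2 y z) - ρ y (ω2 x z) + ρ z (ω2 x y)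
          - ω2 (br1 x y) z + ω2 (br1 x z) y - ω2 (br1 y z) x = 0)) := by
  obtain ⟨gL1, gL2, gc⟩ := hg
  obtain ⟨hL1, hL2, hc⟩ := hE
  have b1 := hL1.1
  have b2 := hL2.1
  refine ⟨⟨?_, ?_⟩, ⟨?_, ?_, ?_, ?_, ?_, ?_, ?_, ?_, ?_⟩, ⟨?_, ?_, ?_, ?_⟩⟩
  · -- (1a)
    intro x v hv
    constructor
    · simp only [hρ]; rw [hp1, hσ, hv]; exact gL1.1.zeroR x
    · simp only [hμ]; rw [hp2, hσ, hv]; exact gL2.1.zeroR x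
  · -- (1b)
    intro σ' hσ' x v hv
    constructor
    · simp only [hρ]
      exact ker_congr b1 p hab1 (by rw [hσ, hσ']) hv
    · simp only [hμ]
      exact ker_congr b2 p hab2 (by rw [hσ, hσ']) hv
  · -- ρ x linear
    intro x
    simp only [hρ]
    exact ⟨fun u v => b1.2.2.1 _ u v, fun c v => b1.2.2.2 c _ v⟩
  · -- μ x linear
    intro x
    simp only [hμ]
    exact ⟨fun u v => b2.2.2.1 _ u v, fun c v => b2.2.2.2 c _ v⟩
  · intro x y v; simp only [hρ]; rw [map_add, b1.1]
  · intro c x v; simp only [hρ]; rw [map_smul, b1.2.1]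
  · intro x y v; simp only [hμ]; rw [map_add, b2.1]
  · intro c x v; simp only [hμ]; rw [map_smul, b2.2.1]
  · -- ρ rep identity
    intro x y v hv
    simp only [hρ]
    have h1 : Br1 (σ (br1 x y)) v = Br1 (Br1 (σ x) (σ y)) v :=
      ker_congr b1 p hab1 (by rw [hσ, hp1, hσ, hσ]) hv
    rw [h1, hL1.leibniz]
  · -- μ rep identity
    intro x y v hv
    simp only [hμ]
    have h1 : Br2 (σ (br2 x y)) v = Br2 (Br2 (σ x) (σ y)) v :=
      ker_congr b2 p hab2 (by rw [hσ, hp2, hσ, hσ]) hv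
    rw [h1, hL2.leibniz]
  · -- mixed rep identity
    intro x y v hv
    simp only [hρ, hμ]
    have h1 : Br1 (σ (br2 x y)) v = Br1 (Br2 (σ x) (σ y)) v :=
      ker_congr b1 p hab1 (by rw [hσ, hp2, hσ, hσ]) hv
    have h2 : Br2 (σ (br1 x y)) v = Br2 (Br1 (σ x) (σ y)) v :=
      ker_congr b2 p hab2 (by rw [hσ, hp1, hσ, hσ]) hv
    rw [h1, h2, compat_leibniz hL1 hL2 hc]
  · -- (3a)
    intro x y
    constructor
    · simp only [hω1, map_sub, hp1, hσ]; exact sub_self _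
    · simp only [hω2, map_sub, hp2, hσ]; exact sub_self _
  · -- (3b) ω1 cocycle
    intro x y z
    simp only [hρ, hω1]
    have s1 := b1.subR (σ x) (Br1 (σ y) (σ z)) (σ (br1 y z))
    have s2 := b1.subR (σ y) (Br1 (σ x) (σ z)) (σ (br1 x z))
    have s3 := b1.subR (σ z) (Br1 (σ x) (σ y)) (σ (br1 x y))
    have a1 := hL1.anti (σ (br1 y z)) (σ x)
    have a2 := hL1.anti (σ (br1 x z)) (σ y)
    have a3 := hL1.anti (σ (br1 x y)) (σ z)
    have hj := hL1.jacobi2 (σ x) (σ y) (σ z)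
    have hs : σ (br1 (br1 x y) z) - σ (br1 (br1 x z) y) + σ (br1 (br1 y z) x) = 0 := by
      simpa using congrArg σ (gL1.jacobi1 x y z)
    linear_combination (norm := module) s1 - s2 + s3 - a3 + a2 - a1 + hj + hs
  · -- (3c) ω2 cocycle
    intro x y z
    simp only [hμ, hω2]
    have s1 := b2.subR (σ x) (Br2 (σ y) (σ z)) (σ (br2 y z))
    have s2 := b2.subR (σ y) (Br2 (σ x) (σ z)) (σ (br2 x z))
    have s3 := b2.subR (σ z) (Br2 (σ x) (σ y)) (σ (br2 x y))
    have a1 := hL2.anti (σ (br2 y z)) (σ x)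
    have a2 := hL2.anti (σ (br2 x z)) (σ y)
    have a3 := hL2.anti (σ (br2 x y)) (σ z)
    have hj := hL2.jacobi2 (σ x) (σ y) (σ z)
    have hs : σ (br2 (br2 x y) z) - σ (br2 (br2 x z) y) + σ (br2 (br2 y z) x) = 0 := by
      simpa using congrArg σ (gL2.jacobi1 x y z)
    linear_combination (norm := module) s1 - s2 + s3 - a3 + a2 - a1 + hj + hs
  · -- (3d) mixed cocycle
    intro x y z
    simp only [hρ, hμ, hω1, hω2]
    have t1 := b2.subR (σ x) (Br1 (σ y) (σ z)) (σ (br1 y z))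
    have t2 := b2.subR (σ y) (Br1 (σ x) (σ z)) (σ (br1 x z))
    have t3 := b2.subR (σ z) (Br1 (σ x) (σ y)) (σ (br1 x y))
    have r1 := b1.subR (σ x) (Br2 (σ y) (σ z)) (σ (br2 y z))
    have r2 := b1.subR (σ y) (Br2 (σ x) (σ z)) (σ (br2 x z))
    have r3 := b1.subR (σ z) (Br2 (σ x) (σ y)) (σ (br2 x y))
    have c1 := hL1.anti (σ (br2 y z)) (σ x)
    have c2 := hL1.anti (σ (br2 x z)) (σ y)
    have c3 := hL1.anti (σ (br2 x y)) (σ z)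
    have d1 := hL2.anti (σ (br1 y z)) (σ x)
    have d2 := hL2.anti (σ (br1 x z)) (σ y)
    have d3 := hL2.anti (σ (br1 x y)) (σ z)
    have hcs := compat_second hL1 hL2 hc (σ x) (σ y) (σ z)
    have hgs : σ (br1 (br2 x y) z) - σ (br1 (br2 x z) y) + σ (br1 (br2 y z) x) +
        σ (br2 (br1 x y) z) - σ (br2 (br1 x z) y) + σ (br2 (br1 y z) x) = 0 := by
      simpa using congrArg σ (compat_first gL1 gL2 gc x y z)
    linear_combination (norm := module) t1 - t2 + t3 + r1 - r2 + r3
      - c3 + c2 - c1 - d3 + d2 - d1 + hcs + hgs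
end

section
/- In the setting of an abelian extension p : ĝ → g of compatible Lie algebras with abelian kernel h, let σ, σ' : g → ĝ be two linear sections (p∘σ = p∘σ' = Id), with associated 2-cocycles ω_1(x,y) = [σ(x),σ(y)]_ĝ − σ([x,y]_g), ω_2(x,y) = {σ(x),σ(y)}_ĝ − σ({x,y}_g) and ω_1', ω_2' defined analogously from σ'. Let ρ(x)v = [σ(x),v]_ĝ and μ(x)v = {σ(x),v}_ĝ (these do not depend on the section). Then φ := σ − σ' takes values in h, and for all x,y in g: ω_1(x,y) − ω_1'(x,y) = ρ(x)φ(y) − ρ(y)φ(x) − φ([x,y]_g) and ω_2(x,y) − ω_2'(x,y) = μ(x)φ(y) − μ(y)φ(x) − φ({x,y}_g); that is, the two cocycle pairs differ by the coboundary of φ. -/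
lemma aux_br {E : Type*} [AddCommGroup E] (Br : E → E → E)
    (haddl : ∀ a a' b, Br (a + a') b = Br a b + Br a' b)
    (haddr : ∀ a b b', Br a (b + b') = Br a b + Br a b')
    (halt : ∀ x, Br x x = 0)
    (a a' b b' : E) (hker : Br (a - a') (b - b') = 0) :
    Br a b - Br a' b' = Br a (b - b') - Br b (a - a') := by
  have subl : ∀ u v w, Br (u - v) w = Br u w - Br v w := by
    intro u v w
    have h := haddl (u - v) v w
    rw [sub_add_cancel] at h
    rw [h]; abel
  have subr : ∀ u v w, Br u (v - w) = Br u v - Br u w := by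
    intro u v w
    have h := haddr u (v - w) w
    rw [sub_add_cancel] at h
    rw [h]; abel
  have anti : ∀ u v, Br u v = - Br v u := by
    intro u v
    have h := halt (u + v)
    rw [haddl, haddr, haddr, halt, halt] at h
    have h2 : Br u v + Br v u = 0 := by
      rw [← h]; abel
    exact eq_neg_of_add_eq_zero_left h2
  have hker' : Br a b - Br a' b - Br a b' + Br a' b' = 0 := by
    rw [← hker, subl, subr, subr]; abel
  have h2 : Br a' b' = Br a' b + Br a b' - Br a b := by
    have h3 : Br a' b' - (Br a' b + Br a b' - Br a b)
        = Br a b - Br a' b - Br a b' + Br a' b' := by abel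
    exact sub_eq_zero.mp (h3.trans hker')
  rw [subr, subr, anti b a, anti b a', h2]
  abel

/-- For an abelian extension `p : E → g` of compatible Lie algebras with
two linear sections `σ, σ'`, the difference `φ = σ - σ'` takes values in the kernel `h`,
and the associated 2-cocycle pairs differ by the coboundary of `φ`:
`ω₁ - ω₁' = d₁φ` and `ω₂ - ω₂' = d₂φ`. -/
theorem abelian_extension_cocycles_differ_by_coboundary {K g E : Type*} [Field K]
    [CharZero K] [AddCommGroup g] [Module K g] [AddCommGroup E] [Module K E]
    (br1 br2 : g → g → g) (Br1 Br2 : E → E → E)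
    (hg : IsCompatLie K br1 br2) (hE : IsCompatLie K Br1 Br2)
    (p : E →ₗ[K] g) (hsurj : Function.Surjective p)
    (hp1 : ∀ a b : E, p (Br1 a b) = br1 (p a) (p b))
    (hp2 : ∀ a b : E, p (Br2 a b) = br2 (p a) (p b))
    (hab1 : ∀ u v : E, p u = 0 → p v = 0 → Br1 u v = 0)
    (hab2 : ∀ u v : E, p u = 0 → p v = 0 → Br2 u v = 0)
    (σ σ' : g →ₗ[K] E) (hσ : ∀ x : g, p (σ x) = x) (hσ' : ∀ x : g, p (σ' x) = x) :
    (∀ x : g, p (σ x - σ' x) = 0) ∧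
    (∀ x y : g,
      (Br1 (σ x) (σ y) - σ (br1 x y)) - (Br1 (σ' x) (σ' y) - σ' (br1 x y))
        = Br1 (σ x) (σ y - σ' y) - Br1 (σ y) (σ x - σ' x)
          - (σ (br1 x y) - σ' (br1 x y))) ∧
    (∀ x y : g,
      (Br2 (σ x) (σ y) - σ (br2 x y)) - (Br2 (σ' x) (σ' y) - σ' (br2 x y))
        = Br2 (σ x) (σ y - σ' y) - Br2 (σ y) (σ x - σ' x)
          - (σ (br2 x y) - σ' (br2 x y))) := by
  have hφ : ∀ x : g, p (σ x - σ' x) = 0 := by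
    intro x
    rw [map_sub, hσ, hσ', sub_self]
  refine ⟨hφ, fun x y => ?_, fun x y => ?_⟩
  · have hker : Br1 (σ x - σ' x) (σ y - σ' y) = 0 := hab1 _ _ (hφ x) (hφ y)
    have := aux_br Br1 hE.1.1.1 hE.1.1.2.2.1 hE.1.2.1 (σ x) (σ' x) (σ y) (σ' y) hker
    rw [← this]; abel
  · have hker : Br2 (σ x - σ' x) (σ y - σ' y) = 0 := hab2 _ _ (hφ x) (hφ y)
    have := aux_br Br2 hE.2.1.1.1 hE.2.1.1.2.2.1 hE.2.1.2.1 (σ x) (σ' x) (σ y) (σ' y) hker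
    rw [← this]; abel
end

section
/- Let (g,[-,-]_g,{-,-}_g) be a compatible Lie algebra over a field K of characteristic 0, h a vector space, and (h; ρ, μ) a representation of g on h. Let (ω_1,ω_2) and (ω_1',ω_2') be two pairs of 2-cocycles (each ω_i a Chevalley–Eilenberg 2-cocycle for the respective bracket and representation, satisfying the mixed cocycle condition), with associated abelian extension compatible Lie algebra structures on g ⊕ h given by [(x,u),(y,v)]_{(ω_1,ρ)} = ([x,y]_g, ρ(x)v − ρ(y)u + ω_1(x,y)), {(x,u),(y,v)}_{(ω_2,μ)} = ({x,y}_g, μ(x)v − μ(y)u + ω_2(x,y)) and similarly for the primed data. Then the two extensions are isomorphic — i.e. there exists a compatible Lie algebra isomorphism θ : g ⊕ h → g ⊕ h with θ(0,u) = (0,u) for all u ∈ h and with first component of θ(x,u) equal to x — if and only if there exists a linear map φ : g → h such that ω_1'(x,y) − ω_1(x,y) = ρ(x)φ(y) − ρ(y)φ(x) − φ([x,y]_g) and ω_2'(x,y) − ω_2(x,y) = μ(x)φ(y) − μ(y)φ(x) − φ({x,y}_g) for all x,y in g. -/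
/-- A representation of the Lie algebra `(g, br)` on `V`. -/
def IsRep (K : Type*) {g V : Type*} [Field K] [AddCommGroup g] [Module K g]
    [AddCommGroup V] [Module K V] (br : g → g → g) (ρ : g → V → V) : Prop :=
  (∀ x, IsLinearMap K (ρ x)) ∧
  (∀ x y v, ρ (x + y) v = ρ x v + ρ y v) ∧
  (∀ (c : K) (x : g) (v : V), ρ (c • x) v = c • ρ x v) ∧
  (∀ x y v, ρ (br x y) v = ρ x (ρ y v) - ρ y (ρ x v))

/-- A representation of the compatible Lie algebra `(g, br1, br2)` on `V`. -/
def IsCompatRep (K : Type*) {g V : Type*} [Field K] [AddCommGroup g] [Module K g]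
    [AddCommGroup V] [Module K V] (br1 br2 : g → g → g) (ρ μ : g → V → V) : Prop :=
  IsRep K br1 ρ ∧ IsRep K br2 μ ∧
  ∀ x y v, ρ (br2 x y) v + μ (br1 x y) v =
    ρ x (μ y v) - μ y (ρ x v) + μ x (ρ y v) - ρ y (μ x v)

/-- Two abelian extensions of a compatible Lie algebra `(g, br1, br2)`
by `h` determined by cocycle pairs `(ω₁, ω₂)` and `(ω₁', ω₂')` (with the same
representation `(ρ, μ)`) are isomorphic — via a compatible Lie algebra isomorphism
`θ : g ⊕ h → g ⊕ h` fixing `h` pointwise and inducing the identity on `g` — iff the two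
cocycle pairs differ by the coboundary of some linear map `φ : g → h`. -/
theorem abelian_extensions_isomorphic_iff {K g h : Type*} [Field K] [CharZero K]
    [AddCommGroup g] [Module K g] [AddCommGroup h] [Module K h]
    (br1 br2 : g → g → g) (ρ μ : g → h → h) (ω1 ω2 ω1' ω2' : g → g → h)
    (hg : IsCompatLie K br1 br2) (hrep : IsCompatRep K br1 br2 ρ μ)
    (hb1 : IsBilin K ω1) (hb2 : IsBilin K ω2)
    (ha1 : ∀ x, ω1 x x = 0) (ha2 : ∀ x, ω2 x x = 0)
    (hb1' : IsBilin K ω1') (hb2' : IsBilin K ω2')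
    (ha1' : ∀ x, ω1' x x = 0) (ha2' : ∀ x, ω2' x x = 0)
    (hcoc1 : ∀ x y z : g,
      ρ x (ω1 y z) - ρ y (ω1 x z) + ρ z (ω1 x y)
        - ω1 (br1 x y) z + ω1 (br1 x z) y - ω1 (br1 y z) x = 0)
    (hcoc2 : ∀ x y z : g,
      μ x (ω2 y z) - μ y (ω2 x z) + μ z (ω2 x y)
        - ω2 (br2 x y) z + ω2 (br2 x z) y - ω2 (br2 y z) x = 0)
    (hmix : ∀ x y z : g,
      μ x (ω1 y z) - μ y (ω1 x z) + μ z (ω1 x y)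
        - ω1 (br2 x y) z + ω1 (br2 x z) y - ω1 (br2 y z) x
      + ρ x (ω2 y z) - ρ y (ω2 x z) + ρ z (ω2 x y)
        - ω2 (br1 x y) z + ω2 (br1 x z) y - ω2 (br1 y z) x = 0)
    (hcoc1' : ∀ x y z : g,
      ρ x (ω1' y z) - ρ y (ω1' x z) + ρ z (ω1' x y)
        - ω1' (br1 x y) z + ω1' (br1 x z) y - ω1' (br1 y z) x = 0)
    (hcoc2' : ∀ x y z : g,
      μ x (ω2' y z) - μ y (ω2' x z) + μ z (ω2' x y)
        - ω2' (br2 x y) z + ω2' (br2 x z) y - ω2' (br2 y z) x = 0)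
    (hmix' : ∀ x y z : g,
      μ x (ω1' y z) - μ y (ω1' x z) + μ z (ω1' x y)
        - ω1' (br2 x y) z + ω1' (br2 x z) y - ω1' (br2 y z) x
      + ρ x (ω2' y z) - ρ y (ω2' x z) + ρ z (ω2' x y)
        - ω2' (br1 x y) z + ω2' (br1 x z) y - ω2' (br1 y z) x = 0) :
    (∃ θ : (g × h) →ₗ[K] (g × h), Function.Bijective θ ∧
      (∀ p q : g × h,
        θ (br1 p.1 q.1, ρ p.1 q.2 - ρ q.1 p.2 + ω1 p.1 q.1)
          = (br1 (θ p).1 (θ q).1,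
              ρ (θ p).1 (θ q).2 - ρ (θ q).1 (θ p).2 + ω1' (θ p).1 (θ q).1)) ∧
      (∀ p q : g × h,
        θ (br2 p.1 q.1, μ p.1 q.2 - μ q.1 p.2 + ω2 p.1 q.1)
          = (br2 (θ p).1 (θ q).1,
              μ (θ p).1 (θ q).2 - μ (θ q).1 (θ p).2 + ω2' (θ p).1 (θ q).1)) ∧
      (∀ u : h, θ ((0 : g), u) = ((0 : g), u)) ∧
      (∀ p : g × h, (θ p).1 = p.1)) ↔
    (∃ φ : g →ₗ[K] h, ∀ x y : g,
      (ω1' x y - ω1 x y = ρ x (φ y) - ρ y (φ x) - φ (br1 x y)) ∧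
      (ω2' x y - ω2 x y = μ x (φ y) - μ y (φ x) - φ (br2 x y))) := by

  obtain ⟨hρ, hμ, _⟩ := hrep
  have hρlin := hρ.1
  have hμlin := hμ.1
  constructor
  · rintro ⟨θ, hbij, hθ1, hθ2, hθh, hθfst⟩
    refine ⟨-((LinearMap.snd K g h).comp (θ.comp (LinearMap.inl K g h))), ?_⟩
    intro x y
    set φ : g →ₗ[K] h := -((LinearMap.snd K g h).comp (θ.comp (LinearMap.inl K g h))) with hφ
    have hθx : ∀ x : g, θ (x, (0:h)) = (x, -φ x) := by
      intro x
      have h1 : (θ (x, (0:h))).1 = x := hθfst (x, 0)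
      have h2 : (θ (x, (0:h))).2 = -φ x := by simp [hφ]
      exact Prod.ext h1 h2
    constructor
    · have := hθ1 (x, (0:h)) (y, (0:h))
      rw [hθx x, hθx y] at this
      simp only at this
      have hL : θ (br1 x y, ρ x 0 - ρ y 0 + ω1 x y) = (br1 x y, -φ (br1 x y) + ω1 x y) := by
        rw [(hρlin x).map_zero, (hρlin y).map_zero]
        have : ((br1 x y, (0:h) - 0 + ω1 x y) : g × h)
            = (br1 x y, (0:h)) + ((0:g), ω1 x y) := by
          simp
        rw [this, map_add, hθx, hθh]
        simp
      rw [hL] at this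
      have h2 := congrArg Prod.snd this
      simp only at h2
      rw [(hρlin x).map_neg, (hρlin y).map_neg] at h2
      have : ω1' x y = -φ (br1 x y) + ω1 x y + ρ x (φ y) - ρ y (φ x) := by
        rw [h2]; abel
      rw [this]; abel
    · have := hθ2 (x, (0:h)) (y, (0:h))
      rw [hθx x, hθx y] at this
      simp only at this
      have hL : θ (br2 x y, μ x 0 - μ y 0 + ω2 x y) = (br2 x y, -φ (br2 x y) + ω2 x y) := by
        rw [(hμlin x).map_zero, (hμlin y).map_zero]
        have : ((br2 x y, (0:h) - 0 + ω2 x y) : g × h)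
            = (br2 x y, (0:h)) + ((0:g), ω2 x y) := by
          simp
        rw [this, map_add, hθx, hθh]
        simp
      rw [hL] at this
      have h2 := congrArg Prod.snd this
      simp only at h2
      rw [(hμlin x).map_neg, (hμlin y).map_neg] at h2
      have : ω2' x y = -φ (br2 x y) + ω2 x y + μ x (φ y) - μ y (φ x) := by
        rw [h2]; abel
      rw [this]; abel
  · rintro ⟨φ, hφ⟩
    refine ⟨{ toFun := fun p => (p.1, p.2 - φ p.1),
              map_add' := by intro p q; ext <;> simp <;> abel
              map_smul' := by intro c p; ext <;> simp [smul_sub] }, ?_, ?_, ?_, ?_, ?_⟩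
    · refine Function.bijective_iff_has_inverse.2 ⟨fun p => (p.1, p.2 + φ p.1), ?_, ?_⟩
      · intro p; simp
      · intro p; simp
    · intro p q
      have h1 := (hφ p.1 q.1).1
      ext
      · simp
      · simp only [LinearMap.coe_mk, AddHom.coe_mk]
        rw [(hρlin p.1).map_sub, (hρlin q.1).map_sub]
        have : ω1' p.1 q.1 = ω1 p.1 q.1 + (ρ p.1 (φ q.1) - ρ q.1 (φ p.1) - φ (br1 p.1 q.1)) := by
          rw [← h1]; abel
        rw [this]; abel
    · intro p q
      have h2 := (hφ p.1 q.1).2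
      ext
      · simp
      · simp only [LinearMap.coe_mk, AddHom.coe_mk]
        rw [(hμlin p.1).map_sub, (hμlin q.1).map_sub]
        have : ω2' p.1 q.1 = ω2 p.1 q.1 + (μ p.1 (φ q.1) - μ q.1 (φ p.1) - φ (br2 p.1 q.1)) := by
          rw [← h2]; abel
        rw [this]; abel
    · intro u; simp
    · intro p; simp
end

section
/- Let (g,[-,-]_g,{-,-}_g) and (h,[-,-]_h,{-,-}_h) be compatible Lie algebras over a field K of characteristic 0, and let (ω_1,ω_2,ρ,μ) and (ω_1',ω_2',ρ',μ') be two sets of extension data such that the corresponding brackets [(x,u),(y,v)]_{(ω_1,ρ)} = ([x,y]_g, ρ(x)v − ρ(y)u + ω_1(x,y) + [u,v]_h), {(x,u),(y,v)}_{(ω_2,μ)} = ({x,y}_g, μ(x)v − μ(y)u + ω_2(x,y) + {u,v}_h), and the analogously defined primed brackets, each make g ⊕ h a compatible Lie algebra. Then the two extensions are isomorphic — i.e. there exists a compatible Lie algebra isomorphism θ from (g ⊕ h, [-,-]_{(ω_1,ρ)}, {-,-}_{(ω_2,μ)}) to (g ⊕ h, [-,-]_{(ω_1',ρ')}, {-,-}_{(ω_2',μ')})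 with θ(0,u) = (0,u) for all u ∈ h and with first component of θ(x,u) equal to x — if and only if there exists a linear map ξ : g → h such that for all x,y ∈ g and v ∈ h: (1) ρ'(x)v − ρ(x)v = [ξ(x),v]_h; (2) μ'(x)v − μ(x)v = {ξ(x),v}_h; (3) ω_1'(x,y) − ω_1(x,y) = ρ(x)ξ(y) − ρ(y)ξ(x) − ξ([x,y]_g) + [ξ(x),ξ(y)]_h; (4) ω_2'(x,y) − ω_2(x,y) = μ(x)ξ(y) − μ(y)ξ(x) − ξ({x,y}_g) + {ξ(x),ξ(y)}_h. -/
section Helpers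

variable {K A B C : Type*} [Field K] [AddCommGroup A] [Module K A]
  [AddCommGroup B] [Module K B] [AddCommGroup C] [Module K C]

lemma IsBilin.zl {f : A → B → C} (hf : IsBilin K f) (b : B) : f 0 b = 0 := by
  have := hf.2.1 0 0 b; simpa using this

lemma IsBilin.zr {f : A → B → C} (hf : IsBilin K f) (a : A) : f a 0 = 0 := by
  have := hf.2.2.2 0 a 0; simpa using this

lemma IsBilin.nl {f : A → B → C} (hf : IsBilin K f) (a : A) (b : B) :
    f (-a) b = - f a b := by
  have := hf.2.1 (-1) a b; simpa using this

lemma IsBilin.nr {f : A → B → C} (hf : IsBilin K f) (a : A) (b : B) :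
    f a (-b) = - f a b := by
  have := hf.2.2.2 (-1) a b; simpa using this

lemma IsBilin.sl {f : A → B → C} (hf : IsBilin K f) (a a' : A) (b : B) :
    f (a - a') b = f a b - f a' b := by
  rw [sub_eq_add_neg, hf.1, hf.nl, sub_eq_add_neg]

lemma IsBilin.sr {f : A → B → C} (hf : IsBilin K f) (a : A) (b b' : B) :
    f a (b - b') = f a b - f a b' := by
  rw [sub_eq_add_neg, hf.2.2.1, hf.nr, sub_eq_add_neg]

lemma IsBilin.anti {f : A → A → C} (hf : IsBilin K f) (ha : ∀ x, f x x = 0)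
    (a b : A) : f a b = - f b a := by
  have h := ha (a + b)
  rw [hf.1, hf.2.2.1, hf.2.2.1, ha, ha] at h
  simp only [zero_add, add_zero] at h
  exact eq_neg_of_add_eq_zero_left h

end Helpers

/-- Two nonabelian extensions of the compatible Lie algebra `g` by the
compatible Lie algebra `h`, determined by data `(ω₁, ω₂, ρ, μ)` and `(ω₁', ω₂', ρ', μ')`
each making `g ⊕ h` a compatible Lie algebra, are isomorphic — via a compatible Lie
algebra isomorphism `θ` fixing `h` pointwise and inducing the identity on `g` — iff there
exists a linear map `ξ : g → h` satisfying the four transformation equations. -/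
theorem nonabelian_extensions_isomorphic_iff {K g h : Type*} [Field K] [CharZero K]
    [AddCommGroup g] [Module K g] [AddCommGroup h] [Module K h]
    (br1g br2g : g → g → g) (br1h br2h : h → h → h)
    (ρ μ ρ' μ' : g → h → h) (ω1 ω2 ω1' ω2' : g → g → h)
    (hg : IsCompatLie K br1g br2g) (hh : IsCompatLie K br1h br2h)
    (hρlin : ∀ x : g, IsLinearMap K (ρ x)) (hμlin : ∀ x : g, IsLinearMap K (μ x))
    (hρadd : ∀ (x y : g) (v : h), ρ (x + y) v = ρ x v + ρ y v)
    (hρsmul : ∀ (c : K) (x : g) (v : h), ρ (c • x) v = c • ρ x v)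
    (hμadd : ∀ (x y : g) (v : h), μ (x + y) v = μ x v + μ y v)
    (hμsmul : ∀ (c : K) (x : g) (v : h), μ (c • x) v = c • μ x v)
    (hρlin' : ∀ x : g, IsLinearMap K (ρ' x)) (hμlin' : ∀ x : g, IsLinearMap K (μ' x))
    (hρadd' : ∀ (x y : g) (v : h), ρ' (x + y) v = ρ' x v + ρ' y v)
    (hρsmul' : ∀ (c : K) (x : g) (v : h), ρ' (c • x) v = c • ρ' x v)
    (hμadd' : ∀ (x y : g) (v : h), μ' (x + y) v = μ' x v + μ' y v)
    (hμsmul' : ∀ (c : K) (x : g) (v : h), μ' (c • x) v = c • μ' x v)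
    (hb1 : IsBilin K ω1) (hb2 : IsBilin K ω2)
    (ha1 : ∀ x, ω1 x x = 0) (ha2 : ∀ x, ω2 x x = 0)
    (hb1' : IsBilin K ω1') (hb2' : IsBilin K ω2')
    (ha1' : ∀ x, ω1' x x = 0) (ha2' : ∀ x, ω2' x x = 0)
    (hext : IsCompatLie K
      (fun p q : g × h =>
        (br1g p.1 q.1, ρ p.1 q.2 - ρ q.1 p.2 + ω1 p.1 q.1 + br1h p.2 q.2))
      (fun p q : g × h =>
        (br2g p.1 q.1, μ p.1 q.2 - μ q.1 p.2 + ω2 p.1 q.1 + br2h p.2 q.2)))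
    (hext' : IsCompatLie K
      (fun p q : g × h =>
        (br1g p.1 q.1, ρ' p.1 q.2 - ρ' q.1 p.2 + ω1' p.1 q.1 + br1h p.2 q.2))
      (fun p q : g × h =>
        (br2g p.1 q.1, μ' p.1 q.2 - μ' q.1 p.2 + ω2' p.1 q.1 + br2h p.2 q.2))) :
    (∃ θ : (g × h) →ₗ[K] (g × h), Function.Bijective θ ∧
      (∀ p q : g × h,
        θ (br1g p.1 q.1, ρ p.1 q.2 - ρ q.1 p.2 + ω1 p.1 q.1 + br1h p.2 q.2)
          = (br1g (θ p).1 (θ q).1,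
              ρ' (θ p).1 (θ q).2 - ρ' (θ q).1 (θ p).2 + ω1' (θ p).1 (θ q).1
                + br1h (θ p).2 (θ q).2)) ∧
      (∀ p q : g × h,
        θ (br2g p.1 q.1, μ p.1 q.2 - μ q.1 p.2 + ω2 p.1 q.1 + br2h p.2 q.2)
          = (br2g (θ p).1 (θ q).1,
              μ' (θ p).1 (θ q).2 - μ' (θ q).1 (θ p).2 + ω2' (θ p).1 (θ q).1
                + br2h (θ p).2 (θ q).2)) ∧
      (∀ u : h, θ ((0 : g), u) = ((0 : g), u)) ∧
      (∀ p : g × h, (θ p).1 = p.1)) ↔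
    (∃ ξ : g →ₗ[K] h, ∀ x y : g, ∀ v : h,
      (ρ' x v - ρ x v = br1h (ξ x) v) ∧
      (μ' x v - μ x v = br2h (ξ x) v) ∧
      (ω1' x y - ω1 x y = ρ x (ξ y) - ρ y (ξ x) - ξ (br1g x y) + br1h (ξ x) (ξ y)) ∧
      (ω2' x y - ω2 x y = μ x (ξ y) - μ y (ξ x) - ξ (br2g x y) + br2h (ξ x) (ξ y))) := by
  obtain ⟨⟨hB1g, hA1g, -⟩, ⟨hB2g, hA2g, -⟩, -⟩ := hg
  obtain ⟨⟨hB1h, hA1h, -⟩, ⟨hB2h, hA2h, -⟩, -⟩ := hh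
  have anti1 : ∀ a b : h, br1h a b = - br1h b a := hB1h.anti hA1h
  have anti2 : ∀ a b : h, br2h a b = - br2h b a := hB2h.anti hA2h
  have hρ0 : ∀ v : h, ρ 0 v = 0 := fun v => by
    have := hρsmul 0 0 v; simpa using this
  have hμ0 : ∀ v : h, μ 0 v = 0 := fun v => by
    have := hμsmul 0 0 v; simpa using this
  have hρ'0 : ∀ v : h, ρ' 0 v = 0 := fun v => by
    have := hρsmul' 0 0 v; simpa using this
  have hμ'0 : ∀ v : h, μ' 0 v = 0 := fun v => by
    have := hμsmul' 0 0 v; simpa using this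
  constructor
  · rintro ⟨θ, hbij, hbr1, hbr2, hfixh, hfst⟩
    obtain ⟨ξf, hξfdef⟩ : ∃ f : g → h, ∀ x, f x = -(θ (x, 0)).2 :=
      ⟨_, fun _ => rfl⟩
    have hθx0 : ∀ x : g, θ (x, (0:h)) = (x, -ξf x) := by
      intro x
      refine Prod.ext_iff.mpr ⟨hfst (x, 0), ?_⟩
      rw [hξfdef]
      simp
    have hθ : ∀ (x : g) (u : h), θ (x, u) = (x, u - ξf x) := by
      intro x u
      have hsum : ((x, u) : g × h) = (x, (0:h)) + ((0:g), u) := by simp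
      rw [hsum, map_add, hθx0, hfixh, Prod.mk_add_mk]
      refine Prod.ext_iff.mpr ⟨by simp, ?_⟩
      show -ξf x + u = u - ξf x
      abel
    have hξadd : ∀ x y : g, ξf (x + y) = ξf x + ξf y := by
      intro x y
      have hsum : ((x + y, (0:h)) : g × h) = (x, 0) + (y, 0) := by simp
      rw [hξfdef, hξfdef, hξfdef, hsum, map_add, Prod.snd_add, neg_add]
    have hξsmul : ∀ (c : K) (x : g), ξf (c • x) = c • ξf x := by
      intro c x
      have hsm : ((c • x, (0:h)) : g × h) = c • (x, 0) := by simp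
      rw [hξfdef, hξfdef, hsm, map_smul, Prod.smul_snd, smul_neg]
    have hξ0 : ξf 0 = 0 := by
      have := hξsmul 0 0; simpa using this
    have heq1 : ∀ (x : g) (v : h), ρ' x v - ρ x v = br1h (ξf x) v := by
      intro x v
      have H := hbr1 (x, (0:h)) ((0:g), v)
      simp only [hθ] at H
      try simp only [hB1g.zr, hb1.zr, hb1'.zr] at H
      try simp only [hξ0, hρ0, hρ'0, (hρlin x).map_zero, (hρlin' x).map_zero] at H
      try simp only [hB1h.zl, hB1h.zr] at H
      try simp only [zero_sub, sub_zero, zero_add, add_zero, neg_zero] at H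
      try simp only [hB1h.nl, hB1h.nr] at H
      try simp only [hξ0, hρ0, hρ'0] at H
      try simp only [zero_sub, sub_zero, zero_add, add_zero, neg_zero] at H
      try simp only [Prod.mk.injEq, eq_self_iff_true, true_and] at H
      rw [H]; abel
    have heq2 : ∀ (x : g) (v : h), μ' x v - μ x v = br2h (ξf x) v := by
      intro x v
      have H := hbr2 (x, (0:h)) ((0:g), v)
      simp only [hθ] at H
      try simp only [hB2g.zr, hb2.zr, hb2'.zr] at H
      try simp only [hξ0, hμ0, hμ'0, (hμlin x).map_zero, (hμlin' x).map_zero] at H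
      try simp only [hB2h.zl, hB2h.zr] at H
      try simp only [zero_sub, sub_zero, zero_add, add_zero, neg_zero] at H
      try simp only [hB2h.nl, hB2h.nr] at H
      try simp only [hξ0, hμ0, hμ'0] at H
      try simp only [zero_sub, sub_zero, zero_add, add_zero, neg_zero] at H
      try simp only [Prod.mk.injEq, eq_self_iff_true, true_and] at H
      rw [H]; abel
    have hρ'eq : ∀ (x : g) (v : h), ρ' x v = ρ x v + br1h (ξf x) v :=
      fun x v => sub_eq_iff_eq_add'.mp (heq1 x v)
    have hμ'eq : ∀ (x : g) (v : h), μ' x v = μ x v + br2h (ξf x) v :=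
      fun x v => sub_eq_iff_eq_add'.mp (heq2 x v)
    refine ⟨IsLinearMap.mk' ξf ⟨hξadd, hξsmul⟩, ?_⟩
    intro x y v
    simp only [IsLinearMap.mk'_apply]
    refine ⟨heq1 x v, heq2 x v, ?_, ?_⟩
    · have H := hbr1 (x, (0:h)) (y, (0:h))
      simp only [hθ] at H
      try simp only [(hρlin x).map_zero, (hρlin y).map_zero, hB1h.zl, hB1h.zr] at H
      try simp only [zero_sub, sub_zero, zero_add, add_zero, neg_zero, sub_self] at H
      try simp only [hρ'eq] at H
      try simp only [(hρlin x).map_neg, (hρlin y).map_neg, hB1h.nl, hB1h.nr] at H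
      try simp only [neg_neg, zero_sub, sub_zero, zero_add, add_zero, neg_zero] at H
      try simp only [Prod.mk.injEq, eq_self_iff_true, true_and] at H
      rw [anti1 (ξf y) (ξf x)] at H
      rw [← sub_eq_zero] at H ⊢
      have H2 := neg_eq_zero.mpr H
      abel_nf at H H2 ⊢
      first
      | exact H
      | exact H2
      | (rw [← H]; abel)
      | (rw [← H2]; abel)
    · have H := hbr2 (x, (0:h)) (y, (0:h))
      simp only [hθ] at H
      try simp only [(hμlin x).map_zero, (hμlin y).map_zero, hB2h.zl, hB2h.zr] at H
      try simp only [zero_sub, sub_zero, zero_add, add_zero, neg_zero, sub_self] at H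
      try simp only [hμ'eq] at H
      try simp only [(hμlin x).map_neg, (hμlin y).map_neg, hB2h.nl, hB2h.nr] at H
      try simp only [neg_neg, zero_sub, sub_zero, zero_add, add_zero, neg_zero] at H
      try simp only [Prod.mk.injEq, eq_self_iff_true, true_and] at H
      rw [anti2 (ξf y) (ξf x)] at H
      rw [← sub_eq_zero] at H ⊢
      have H2 := neg_eq_zero.mpr H
      abel_nf at H H2 ⊢
      first
      | exact H
      | exact H2
      | (rw [← H]; abel)
      | (rw [← H2]; abel)
  · rintro ⟨ξ, hξ⟩
    have e1 : ∀ (x : g) (v : h), ρ' x v = br1h (ξ x) v + ρ x v :=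
      fun x v => eq_add_of_sub_eq (hξ x x v).1
    have e2 : ∀ (x : g) (v : h), μ' x v = br2h (ξ x) v + μ x v :=
      fun x v => eq_add_of_sub_eq (hξ x x v).2.1
    have e3 : ∀ x y : g, ω1' x y =
        (ρ x (ξ y) - ρ y (ξ x) - ξ (br1g x y) + br1h (ξ x) (ξ y)) + ω1 x y :=
      fun x y => eq_add_of_sub_eq (hξ x y 0).2.2.1
    have e4 : ∀ x y : g, ω2' x y =
        (μ x (ξ y) - μ y (ξ x) - ξ (br2g x y) + br2h (ξ x) (ξ y)) + ω2 x y :=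
      fun x y => eq_add_of_sub_eq (hξ x y 0).2.2.2
    refine ⟨{ toFun := fun p => (p.1, p.2 - ξ p.1)
              map_add' := by
                intro p q
                simp only [Prod.fst_add, Prod.snd_add, map_add, Prod.mk_add_mk,
                  Prod.mk.injEq]
                exact ⟨by trivial, by abel⟩
              map_smul' := by
                intro c p
                simp only [Prod.smul_fst, Prod.smul_snd, map_smul, Prod.smul_mk,
                  RingHom.id_apply, Prod.mk.injEq]
                exact ⟨by trivial, by rw [smul_sub]⟩ }, ?_, ?_, ?_, ?_, ?_⟩
    · refine Function.bijective_iff_has_inverse.mpr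
        ⟨fun p => (p.1, p.2 + ξ p.1), fun p => ?_, fun p => ?_⟩ <;>
      · simp only [LinearMap.coe_mk, AddHom.coe_mk]
        refine Prod.ext_iff.mpr ⟨rfl, ?_⟩
        simp
    · rintro ⟨x, u⟩ ⟨y, v⟩
      simp only [LinearMap.coe_mk, AddHom.coe_mk]
      try simp only [e1, e3] at *
      try simp only [hB1h.sl, hB1h.sr, (hρlin x).map_sub, (hρlin y).map_sub]
      try simp only [Prod.mk.injEq, eq_self_iff_true, true_and]
      rw [anti1 (ξ y) u, anti1 (ξ y) (ξ x)]
      abel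
    · rintro ⟨x, u⟩ ⟨y, v⟩
      simp only [LinearMap.coe_mk, AddHom.coe_mk]
      try simp only [e2, e4] at *
      try simp only [hB2h.sl, hB2h.sr, (hμlin x).map_sub, (hμlin y).map_sub]
      try simp only [Prod.mk.injEq, eq_self_iff_true, true_and]
      rw [anti2 (ξ y) u, anti2 (ξ y) (ξ x)]
      abel
    · intro u
      simp only [LinearMap.coe_mk, AddHom.coe_mk, map_zero, sub_zero]
    · intro p
      rfl
end
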